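/- arXiv:1909.07715 — 3 statements merged into one kernel-verified Lean document; each statement's English description precedes it below -/
import Mathlib

section
/- For a simple, strongly connected, finite weighted directed graph and distinct vertices x, y, the function ε ↦ κ_ε(x,y) := 1 − W(ν^ε_x, ν^ε_y)/d(x,y) is concave on [0,1], and consequently κ_ε(x,y)/ε is non-increasing in ε ∈ (0,1]. -/
open Finset Filter Topology MeasureTheory
open scoped Classical

noncomputable section

variable {V : Type*}

/-- Vertex weight `μ(x) = Σ_y μ_{xy}`. -/
def vdeg [Fintype V] (μ : V → V → ℝ) (x : V) : ℝ := ∑ y, μ x y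

/-- Transition probability kernel `P(x,y) = μ_{xy}/μ(x)`. -/
def transP [Fintype V] (μ : V → V → ℝ) (x y : V) : ℝ := μ x y / vdeg μ x

/-- `m` is the Perron measure of `(V,μ)`. -/
def IsPerron [Fintype V] (μ : V → V → ℝ) (m : V → ℝ) : Prop :=
  (∀ x, 0 < m x) ∧ (∑ x, m x = 1) ∧ ∀ x, m x = ∑ y, m y * transP μ y x

/-- Mean transition probability kernel `𝒫 = (P + ←P)/2`. -/
def meanK [Fintype V] (μ : V → V → ℝ) (m : V → ℝ) (x y : V) : ℝ :=
  (transP μ x y + m y / m x * transP μ y x) / 2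

/-- There is a directed path of length `n` from `x` to `y`. -/
def HasPathLen (μ : V → V → ℝ) (x y : V) (n : ℕ) : Prop :=
  ∃ c : ℕ → V, c 0 = x ∧ c n = y ∧ ∀ i < n, 0 < μ (c i) (c (i + 1))

/-- The (non-symmetric) graph distance. -/
def gdist (μ : V → V → ℝ) (x y : V) : ℝ :=
  sInf {r : ℝ | ∃ n : ℕ, (r : ℝ) = (n : ℝ) ∧ HasPathLen μ x y n}

/-- The graph is simple: no loops. -/
def IsSimpleW (μ : V → V → ℝ) : Prop := ∀ x, μ x x = 0

/-- The edge weight is nonnegative. -/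
def Nonneg (μ : V → V → ℝ) : Prop := ∀ x y, 0 ≤ μ x y

/-- The graph is strongly connected. -/
def StronglyConnectedW (μ : V → V → ℝ) : Prop := ∀ x y, ∃ n, HasPathLen μ x y n

/-- `π` is a coupling of the probability measures `ν₀, ν₁`. -/
def IsCoupling [Fintype V] (π : V → V → ℝ) (ν₀ ν₁ : V → ℝ) : Prop :=
  (∀ x y, 0 ≤ π x y) ∧ (∀ x, ∑ y, π x y = ν₀ x) ∧ (∀ y, ∑ x, π x y = ν₁ y)

/-- The L¹-Wasserstein distance with cost `d`. -/
def Wass [Fintype V] (d : V → V → ℝ) (ν₀ ν₁ : V → ℝ) : ℝ :=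
  sInf {c : ℝ | ∃ π, IsCoupling π ν₀ ν₁ ∧ c = ∑ x, ∑ y, d x y * π x y}

/-- The probability measure `ν^ε_x`. -/
def nu [Fintype V] (P : V → V → ℝ) (ε : ℝ) (x z : V) : ℝ :=
  if z = x then 1 - ε else ε * P x z

/-- `κ_ε(x,y) = 1 − W(ν^ε_x, ν^ε_y)/d(x,y)`. -/
def kappaEps [Fintype V] (μ : V → V → ℝ) (m : V → ℝ) (ε : ℝ) (x y : V) : ℝ :=
  1 - Wass (gdist μ) (nu (meanK μ m) ε x) (nu (meanK μ m) ε y) / gdist μ x y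

/-- The (positive) Chung Laplacian associated with a kernel `P`. -/
def chungL [Fintype V] (P : V → V → ℝ) (f : V → ℝ) (x : V) : ℝ :=
  f x - ∑ y, P x y * f y

/-- The negative Laplacian `Δ = −ℒ`. -/
def negL [Fintype V] (P : V → V → ℝ) (f : V → ℝ) (x : V) : ℝ :=
  (∑ y, P x y * f y) - f x

/-- `f` is 1-Lipschitz with respect to the non-symmetric distance `d`. -/
def Lip1 (d : V → V → ℝ) (f : V → ℝ) : Prop := ∀ x y, f y - f x ≤ d x y

/-- The asymptotic mean curvature `ℋ_x = ℒρ_x(x)`. -/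
def Hout [Fintype V] (μ : V → V → ℝ) (m : V → ℝ) (x : V) : ℝ :=
  chungL (meanK μ m) (fun y => gdist μ x y) x

/-- The reverse asymptotic mean curvature `←ℋ_x = ℒ←ρ_x(x)`. -/
def Hin [Fintype V] (μ : V → V → ℝ) (m : V → ℝ) (x : V) : ℝ :=
  chungL (meanK μ m) (fun y => gdist μ y x) x

/-- The mixed asymptotic mean curvature `ℋ(x,y) = −(ℋ_x + ←ℋ_y)`. -/
def Hmix [Fintype V] (μ : V → V → ℝ) (m : V → ℝ) (x y : V) : ℝ :=
  -(Hout μ m x + Hin μ m y)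

/-- The neighborhood `𝒩_x = N_x ∪ ←N_x`. -/
def nbr [Fintype V] (μ : V → V → ℝ) (x : V) : Finset V :=
  Finset.univ.filter (fun y => 0 < μ x y ∨ 0 < μ y x)

/-!
The Wasserstein distance is jointly convex, since mixing optimal couplings of two pairs of measures
gives a coupling of the mixed pair, and `ε ↦ ν^ε_x` is affine. Hence `ε ↦ W(ν^ε_x, ν^ε_y)` is convex
and `κ_ε(x,y)` is concave in `ε`. Since `κ_0(x,y) = 1 - W(δ_x, δ_y)/d(x,y) ≥ 0`, concavity gives
`κ_ε ≥ (1 - ε/ε') κ_0 + (ε/ε') κ_ε' ≥ (ε/ε') κ_ε'` for `0 < ε ≤ ε'`.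
-/

section Wasserstein

variable [Fintype V]

lemma IsCoupling.add_smul {π₀ π₁ : V → V → ℝ} {ν₀ ν₁ ν₀' ν₁' : V → ℝ} {a b : ℝ}
    (ha : 0 ≤ a) (hb : 0 ≤ b) (h₀ : IsCoupling π₀ ν₀ ν₁) (h₁ : IsCoupling π₁ ν₀' ν₁') :
    IsCoupling (a • π₀ + b • π₁) (a • ν₀ + b • ν₀') (a • ν₁ + b • ν₁') := by
  refine ⟨fun u v => ?_, fun u => ?_, fun v => ?_⟩
  · simp only [Pi.add_apply, Pi.smul_apply, smul_eq_mul]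
    exact add_nonneg (mul_nonneg ha (h₀.1 u v)) (mul_nonneg hb (h₁.1 u v))
  · simp only [Pi.add_apply, Pi.smul_apply, smul_eq_mul, sum_add_distrib, ← mul_sum,
      h₀.2.1, h₁.2.1]
  · simp only [Pi.add_apply, Pi.smul_apply, smul_eq_mul, sum_add_distrib, ← mul_sum,
      h₀.2.2, h₁.2.2]

lemma isCoupling_mul {ν₀ ν₁ : V → ℝ} (h₀ : ∀ z, 0 ≤ ν₀ z) (h₁ : ∀ z, 0 ≤ ν₁ z)
    (hs₀ : ∑ z, ν₀ z = 1) (hs₁ : ∑ z, ν₁ z = 1) :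
    IsCoupling (fun u v => ν₀ u * ν₁ v) ν₀ ν₁ :=
  ⟨fun u v => mul_nonneg (h₀ u) (h₁ v), fun u => by rw [← mul_sum, hs₁, mul_one],
    fun v => by rw [← sum_mul, hs₀, one_mul]⟩

variable {d : V → V → ℝ}

lemma Wass_le_cost (hd : ∀ u v, 0 ≤ d u v) {π : V → V → ℝ} {ν₀ ν₁ : V → ℝ}
    (hπ : IsCoupling π ν₀ ν₁) : Wass d ν₀ ν₁ ≤ ∑ u, ∑ v, d u v * π u v := by
  refine csInf_le ⟨0, ?_⟩ ⟨π, hπ, rfl⟩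
  rintro c ⟨π', hπ', rfl⟩
  exact sum_nonneg fun u _ => sum_nonneg fun v _ => mul_nonneg (hd u v) (hπ'.1 u v)

lemma exists_cost_lt_Wass_add {ν₀ ν₁ : V → ℝ} (hne : ∃ π, IsCoupling π ν₀ ν₁) {δ : ℝ}
    (hδ : 0 < δ) : ∃ π, IsCoupling π ν₀ ν₁ ∧ ∑ u, ∑ v, d u v * π u v < Wass d ν₀ ν₁ + δ := by
  obtain ⟨π, hπ⟩ := hne
  obtain ⟨c, hc, hlt⟩ := Real.lt_sInf_add_pos (s := {c : ℝ | ∃ π, IsCoupling π ν₀ ν₁ ∧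
    c = ∑ u, ∑ v, d u v * π u v}) ⟨_, π, hπ, rfl⟩ hδ
  obtain ⟨π', hπ', rfl⟩ := hc
  exact ⟨π', hπ', hlt⟩

lemma Wass_add_smul_le (hd : ∀ u v, 0 ≤ d u v) {ν₀ ν₁ ν₀' ν₁' : V → ℝ}
    (hne : ∃ π, IsCoupling π ν₀ ν₁) (hne' : ∃ π, IsCoupling π ν₀' ν₁') {a b : ℝ}
    (ha : 0 ≤ a) (hb : 0 ≤ b) :
    Wass d (a • ν₀ + b • ν₀') (a • ν₁ + b • ν₁') ≤ a * Wass d ν₀ ν₁ + b * Wass d ν₀' ν₁' := by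
  refine le_of_forall_pos_le_add fun δ hδ => ?_
  have hδ' : 0 < δ / (a + b + 1) := by positivity
  obtain ⟨π₀, hπ₀, hc₀⟩ := exists_cost_lt_Wass_add (d := d) hne hδ'
  obtain ⟨π₁, hπ₁, hc₁⟩ := exists_cost_lt_Wass_add (d := d) hne' hδ'
  have hcost : ∑ u, ∑ v, d u v * (a • π₀ + b • π₁) u v
      = a * ∑ u, ∑ v, d u v * π₀ u v + b * ∑ u, ∑ v, d u v * π₁ u v := by
    simp only [Pi.add_apply, Pi.smul_apply, smul_eq_mul, mul_sum, ← sum_add_distrib]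
    exact sum_congr rfl fun u _ => sum_congr rfl fun v _ => by ring
  calc Wass d (a • ν₀ + b • ν₀') (a • ν₁ + b • ν₁')
      ≤ a * ∑ u, ∑ v, d u v * π₀ u v + b * ∑ u, ∑ v, d u v * π₁ u v :=
        hcost ▸ Wass_le_cost hd (hπ₀.add_smul ha hb hπ₁)
    _ ≤ a * (Wass d ν₀ ν₁ + δ / (a + b + 1)) + b * (Wass d ν₀' ν₁' + δ / (a + b + 1)) := by
        gcongr
    _ = a * Wass d ν₀ ν₁ + b * Wass d ν₀' ν₁' + (a + b) / (a + b + 1) * δ := by ring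
    _ ≤ a * Wass d ν₀ ν₁ + b * Wass d ν₀' ν₁' + δ := by
        gcongr
        exact mul_le_of_le_one_left hδ.le ((div_le_one (by linarith)).2 (by linarith))

end Wasserstein

lemma ConcaveOn.antitoneOn_div {s : Set ℝ} {f : ℝ → ℝ} (hf : ConcaveOn ℝ s f) (h0 : 0 ∈ s)
    (hf0 : 0 ≤ f 0) : AntitoneOn (fun x => f x / x) (s ∩ Set.Ioi 0) := by
  rintro a ⟨-, ha⟩ b ⟨hbs, hb⟩ hab
  simp only [Set.mem_Ioi] at ha hb
  have ht : 0 ≤ a / b := div_nonneg ha.le hb.le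
  have ht1 : a / b ≤ 1 := div_le_one_of_le₀ hab hb.le
  have hconc := hf.2 h0 hbs (sub_nonneg.2 ht1) ht (sub_add_cancel 1 (a / b))
  have hpt : (1 - a / b) • (0 : ℝ) + (a / b) • b = a := by
    simp only [smul_eq_mul, mul_zero, zero_add]; field_simp
  rw [hpt, smul_eq_mul, smul_eq_mul] at hconc
  have hfa : a / b * f b ≤ f a := by nlinarith [mul_nonneg (sub_nonneg.2 ht1) hf0]
  calc f b / b = a / b * f b / a := by field_simp
    _ ≤ f a / a := by gcongr

section Kernel

variable [Fintype V] {P : V → V → ℝ}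

lemma nu_nonneg (hP : ∀ u v, 0 ≤ P u v) {ε : ℝ} (h0 : 0 ≤ ε) (h1 : ε ≤ 1) (x z : V) :
    0 ≤ nu P ε x z := by
  unfold nu
  split_ifs
  · linarith
  · exact mul_nonneg h0 (hP x z)

lemma sum_nu {x : V} (hP : ∑ z, P x z = 1) (hPx : P x x = 0) (ε : ℝ) :
    ∑ z, nu P ε x z = 1 := by
  have hsplit : ∀ z, nu P ε x z = (if z = x then 1 - ε else 0) + ε * P x z := by
    intro z
    unfold nu
    split_ifs with h
    · simp [h, hPx]
    · simp
  simp only [hsplit, sum_add_distrib, ← mul_sum, hP, sum_ite_eq', mem_univ, if_true]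
  ring

lemma nu_add_smul (P : V → V → ℝ) {a b : ℝ} (hab : a + b = 1) (ε₀ ε₁ : ℝ) (x : V) :
    nu P (a * ε₀ + b * ε₁) x = a • nu P ε₀ x + b • nu P ε₁ x := by
  funext z
  simp only [nu, Pi.add_apply, Pi.smul_apply, smul_eq_mul]
  split_ifs
  · linear_combination -hab
  · ring

variable {d : V → V → ℝ}

lemma Wass_nu_zero_le (hd : ∀ u v, 0 ≤ d u v) (P : V → V → ℝ) (x y : V) :
    Wass d (nu P 0 x) (nu P 0 y) ≤ d x y := by
  have hdirac : ∀ u, nu P 0 u = fun z => if z = u then 1 else 0 := by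
    intro u; funext z; simp [nu]
  have hcoupling := isCoupling_mul (ν₀ := nu P 0 x) (ν₁ := nu P 0 y)
    (fun z => by rw [hdirac]; positivity) (fun z => by rw [hdirac]; positivity)
    (by simp [hdirac]) (by simp [hdirac])
  refine (Wass_le_cost hd hcoupling).trans_eq ?_
  simp [hdirac]

lemma convexOn_Wass_nu (hd : ∀ u v, 0 ≤ d u v) (hP : ∀ u v, 0 ≤ P u v)
    (hPsum : ∀ u, ∑ v, P u v = 1) (hPdiag : ∀ u, P u u = 0) (x y : V) :
    ConvexOn ℝ (Set.Icc 0 1) (fun ε => Wass d (nu P ε x) (nu P ε y)) := by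
  have hne : ∀ ε ∈ Set.Icc (0 : ℝ) 1, ∃ π, IsCoupling π (nu P ε x) (nu P ε y) :=
    fun ε hε => ⟨_, isCoupling_mul (nu_nonneg hP hε.1 hε.2 x) (nu_nonneg hP hε.1 hε.2 y)
      (sum_nu (hPsum x) (hPdiag x) ε) (sum_nu (hPsum y) (hPdiag y) ε)⟩
  refine ⟨convex_Icc 0 1, fun ε₀ h₀ ε₁ h₁ a b ha hb hab => ?_⟩
  simp only [smul_eq_mul, nu_add_smul P hab]
  exact Wass_add_smul_le hd (hne ε₀ h₀) (hne ε₁ h₁) ha hb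

end Kernel

lemma gdist_nonneg (μ : V → V → ℝ) (u v : V) : 0 ≤ gdist μ u v :=
  Real.sInf_nonneg <| by rintro r ⟨n, rfl, -⟩; positivity

section MeanKernel

variable [Fintype V] {μ : V → V → ℝ} {m : V → ℝ}

lemma vdeg_pos [Nontrivial V] (hnn : Nonneg μ) (hconn : StronglyConnectedW μ) (v : V) :
    0 < vdeg μ v := by
  obtain ⟨w, hw⟩ := exists_ne v
  obtain ⟨n, c, hc0, hcn, hstep⟩ := hconn v w
  have hn : 0 < n := Nat.pos_of_ne_zero <| by rintro rfl; exact hw (hcn ▸ hc0)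
  exact sum_pos' (fun u _ => hnn v u) ⟨c 1, mem_univ _, hc0 ▸ hstep 0 hn⟩

lemma meanK_nonneg (hnn : Nonneg μ) (hm : ∀ v, 0 < m v) (u v : V) : 0 ≤ meanK μ m u v := by
  have hdeg : ∀ w, 0 ≤ vdeg μ w := fun w => sum_nonneg fun z _ => hnn w z
  have h₁ := div_nonneg (hnn u v) (hdeg u)
  have h₂ := div_nonneg (hnn v u) (hdeg v)
  have h₃ := div_nonneg (hm v).le (hm u).le
  unfold meanK transP
  positivity

lemma sum_meanK [Nontrivial V] (hnn : Nonneg μ) (hconn : StronglyConnectedW μ)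
    (hm : IsPerron μ m) (u : V) : ∑ v, meanK μ m u v = 1 := by
  have hP : ∑ v, transP μ u v = 1 := by
    unfold transP
    rw [← sum_div]
    exact div_self (vdeg_pos hnn hconn u).ne'
  have hrev : ∑ v, m v / m u * transP μ v u = 1 := by
    simp only [div_mul_eq_mul_div, ← sum_div, ← hm.2.2 u, div_self (hm.1 u).ne']
  unfold meanK
  rw [← sum_div, sum_add_distrib, hP, hrev]
  norm_num

lemma meanK_self (hsimple : IsSimpleW μ) (u : V) : meanK μ m u u = 0 := by
  simp [meanK, transP, hsimple u]

lemma concaveOn_kappaEps [Nontrivial V] (hnn : Nonneg μ) (hsimple : IsSimpleW μ)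
    (hconn : StronglyConnectedW μ) (hm : IsPerron μ m) (x y : V) :
    ConcaveOn ℝ (Set.Icc 0 1) (fun ε => kappaEps μ m ε x y) := by
  have hW := (convexOn_Wass_nu (gdist_nonneg μ) (meanK_nonneg hnn hm.1)
    (sum_meanK hnn hconn hm) (meanK_self hsimple) x y).smul (inv_nonneg.2 (gdist_nonneg μ x y))
  refine ((concaveOn_const (1 : ℝ) (convex_Icc 0 1)).sub hW).congr fun ε _ => ?_
  simp only [kappaEps, Pi.sub_apply, smul_eq_mul, div_eq_inv_mul]

lemma kappaEps_zero_nonneg (x y : V) : 0 ≤ kappaEps μ m 0 x y :=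
  sub_nonneg.2 <| div_le_one_of_le₀ (Wass_nu_zero_le (gdist_nonneg μ) _ x y) (gdist_nonneg μ x y)

end MeanKernel

/-- concavity of `ε ↦ κ_ε(x,y)` and monotonicity of `κ_ε(x,y)/ε`. -/
theorem kappaEps_concave_and_div_antitone
    {V : Type*} [Fintype V] (μ : V → V → ℝ) (m : V → ℝ)
    (hnn : Nonneg μ) (hsimple : IsSimpleW μ) (hconn : StronglyConnectedW μ)
    (hm : IsPerron μ m) (x y : V) (hxy : x ≠ y) :
    (∀ ε₀ ε₁ t : ℝ, ε₀ ∈ Set.Icc (0:ℝ) 1 → ε₁ ∈ Set.Icc (0:ℝ) 1 →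
        t ∈ Set.Icc (0:ℝ) 1 →
        (1 - t) * kappaEps μ m ε₀ x y + t * kappaEps μ m ε₁ x y
          ≤ kappaEps μ m ((1 - t) * ε₀ + t * ε₁) x y) ∧
    (∀ ε ε' : ℝ, 0 < ε → ε ≤ ε' → ε' ≤ 1 →
        kappaEps μ m ε' x y / ε' ≤ kappaEps μ m ε x y / ε) := by
  have : Nontrivial V := nontrivial_of_ne x y hxy
  have hκ := concaveOn_kappaEps hnn hsimple hconn hm x y
  refine ⟨fun ε₀ ε₁ t h₀ h₁ ht => hκ.2 h₀ h₁ (sub_nonneg.2 ht.2) ht.1 (sub_add_cancel 1 t),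
    fun ε ε' hε hεε' hε' => ?_⟩
  have hε'pos : 0 < ε' := hε.trans_le hεε'
  exact hκ.antitoneOn_div (Set.left_mem_Icc.2 zero_le_one) (kappaEps_zero_nonneg x y)
    ⟨⟨hε.le, hεε'.trans hε'⟩, hε⟩ ⟨⟨hε'pos.le, hε'⟩, hε'pos⟩ hεε'
end
end

section
/- For the (α,β)-weighted Cartesian product of two simple, strongly connected, finite weighted directed graphs, the vertex weight satisfies μ_{(α,β)}(x,x') = (α+β)μ(x)μ'(x'), the transition kernel satisfies P_{(α,β)}((x,x'),(y,y')) = (β/(α+β))P(x,y)δ_{x'}(y') + (α/(α+β))P'(x',y')δ_x(y), the Perron measure is the product 𝔪_{(α,β)}(x,x') = 𝔪(x)𝔪'(x'), and the mean transition kernel satisfies 𝒫_{(α,β)}((x,x'),(y,y')) = (β/(α+β))𝒫(x,y)δ_{x'}(y') + (α/(α+β))𝒫'(x',y')δ_x(y). -/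
open Finset Filter Topology MeasureTheory
open scoped Classical

noncomputable section

variable {V : Type*}

/-- The `(α,β)`-weighted Cartesian product edge weight. -/
def prodW {V V' : Type*} [Fintype V] [Fintype V']
    (μ : V → V → ℝ) (μ' : V' → V' → ℝ) (α β : ℝ) :
    V × V' → V × V' → ℝ :=
  fun p q =>
    β * vdeg μ' p.2 * μ p.1 q.1 * (if q.2 = p.2 then 1 else 0)
      + α * vdeg μ p.1 * μ' p.2 q.2 * (if q.1 = p.1 then 1 else 0)

lemma vdeg_nonneg [Fintype V] {μ : V → V → ℝ} (hnn : Nonneg μ) (x : V) : 0 ≤ vdeg μ x :=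
  Finset.sum_nonneg fun y _ => hnn x y

lemma vdeg_pos_s8 [Fintype V] {μ : V → V → ℝ} {m : V → ℝ} (hnn : Nonneg μ)
    (hm : IsPerron μ m) (x : V) : 0 < vdeg μ x := by
  rcases hm with ⟨hpos, hsum, hstat⟩
  by_contra h
  have h0 : vdeg μ x = 0 := le_antisymm (not_lt.mp h) (vdeg_nonneg hnn x)
  have key : ∑ y, m y = ∑ y, m y * (vdeg μ y / vdeg μ y) := by
    calc ∑ y, m y = ∑ z, ∑ y, m y * transP μ y z := by
          exact Finset.sum_congr rfl fun z _ => hstat z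
      _ = ∑ y, ∑ z, m y * transP μ y z := Finset.sum_comm
      _ = ∑ y, m y * (vdeg μ y / vdeg μ y) := by
          refine Finset.sum_congr rfl fun y _ => ?_
          rw [← Finset.mul_sum]
          congr 1
          simp only [transP, vdeg, ← Finset.sum_div]
  have hlt : ∑ y, m y * (vdeg μ y / vdeg μ y) < ∑ y, m y := by
    refine Finset.sum_lt_sum (fun y _ => ?_) ⟨x, Finset.mem_univ x, ?_⟩
    · rcases eq_or_ne (vdeg μ y) 0 with h | h
      · simp [h, (hpos y).le]
      · simp [div_self h]
    · simp [h0, hpos x]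
  exact absurd key (ne_of_gt hlt)

lemma vdeg_prod {V V' : Type*} [Fintype V] [Fintype V']
    (μ : V → V → ℝ) (μ' : V' → V' → ℝ) (α β : ℝ) (x : V) (x' : V') :
    vdeg (prodW μ μ' α β) (x, x') = (α + β) * vdeg μ x * vdeg μ' x' := by
  simp only [vdeg, prodW, Fintype.sum_prod_type, mul_ite, mul_one, mul_zero,
    Finset.sum_add_distrib, Finset.sum_ite_eq', Finset.mem_univ, if_true]
  have h2 : ∀ (C : V' → ℝ), (∑ y : V, ∑ y' : V', (if y = x then C y' else 0)) = ∑ y', C y' := by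
    intro C; rw [Finset.sum_comm]; simp
  rw [h2]
  rw [← Finset.mul_sum, ← Finset.mul_sum]
  ring

lemma transP_prod {V V' : Type*} [Fintype V] [Fintype V']
    {μ : V → V → ℝ} {μ' : V' → V' → ℝ} {α β : ℝ}
    (hα : 0 < α) (hβ : 0 < β)
    (hv : ∀ x, 0 < vdeg μ x) (hv' : ∀ x', 0 < vdeg μ' x')
    (x y : V) (x' y' : V') :
    transP (prodW μ μ' α β) (x, x') (y, y')
      = β / (α + β) * transP μ x y * (if y' = x' then 1 else 0)
        + α / (α + β) * transP μ' x' y' * (if y = x then 1 else 0) := by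
  have hab : (0:ℝ) < α + β := by linarith
  have h1 := (hv x).ne'
  have h2 := (hv' x').ne'
  rw [transP, vdeg_prod, prodW]
  rcases eq_or_ne y' x' with h | h <;> rcases eq_or_ne y x with h' | h' <;>
    simp only [h, h', if_pos rfl, if_neg, transP, mul_one, mul_zero, add_zero, zero_add] <;>
    field_simp <;> ring

lemma HasPathLen.trans' {μ : V → V → ℝ} {x y z : V} {n k : ℕ}
    (h1 : HasPathLen μ x y n) (h2 : HasPathLen μ y z k) : HasPathLen μ x z (n + k) := by
  obtain ⟨c1, hc10, hc1n, hc1⟩ := h1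
  obtain ⟨c2, hc20, hc2k, hc2⟩ := h2
  have hval2 : ∀ j, n ≤ j → (if j ≤ n then c1 j else c2 (j - n)) = c2 (j - n) := by
    intro j hj
    rcases eq_or_lt_of_le hj with he | he
    · rw [if_pos he.ge, ← he, Nat.sub_self, hc20, hc1n]
    · rw [if_neg (by omega)]
  refine ⟨fun i => if i ≤ n then c1 i else c2 (i - n), by simp [hc10], ?_, ?_⟩
  · show (if n + k ≤ n then c1 (n+k) else c2 (n + k - n)) = z
    rw [hval2 (n+k) (by omega)]
    simp [hc2k]
  · intro i hi
    rcases lt_or_ge i n with h | h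
    · show 0 < μ (if i ≤ n then c1 i else _) (if i + 1 ≤ n then c1 (i+1) else _)
      rw [if_pos h.le, if_pos (by omega)]
      exact hc1 i h
    · show 0 < μ (if i ≤ n then c1 i else c2 (i - n)) (if i + 1 ≤ n then c1 (i+1) else c2 (i + 1 - n))
      rw [hval2 i h, hval2 (i+1) (by omega), show i + 1 - n = (i - n) + 1 by omega]
      exact hc2 (i - n) (by omega)

lemma prod_conn {V V' : Type*} [Fintype V] [Fintype V']
    {μ : V → V → ℝ} {μ' : V' → V' → ℝ} {α β : ℝ}
    (hα : 0 < α) (hβ : 0 < β)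
    (hnn : Nonneg μ) (hnn' : Nonneg μ')
    (hsimple : IsSimpleW μ) (hsimple' : IsSimpleW μ')
    (hconn : StronglyConnectedW μ) (hconn' : StronglyConnectedW μ')
    (hv : ∀ x, 0 < vdeg μ x) (hv' : ∀ x', 0 < vdeg μ' x') :
    StronglyConnectedW (prodW μ μ' α β) := by
  have liftL : ∀ (x y : V) (x' : V') (n : ℕ), HasPathLen μ x y n →
      HasPathLen (prodW μ μ' α β) (x, x') (y, x') n := by
    rintro x y x' n ⟨c, hc0, hcn, hc⟩
    refine ⟨fun i => (c i, x'), by simp [hc0], by simp [hcn], ?_⟩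
    intro i hi
    have : prodW μ μ' α β (c i, x') (c (i+1), x')
        = β * vdeg μ' x' * μ (c i) (c (i+1)) := by
      simp [prodW, hsimple' x']
    rw [this]
    exact mul_pos (mul_pos hβ (hv' x')) (hc i hi)
  have liftR : ∀ (x : V) (x' y' : V') (n : ℕ), HasPathLen μ' x' y' n →
      HasPathLen (prodW μ μ' α β) (x, x') (x, y') n := by
    rintro x x' y' n ⟨c, hc0, hcn, hc⟩
    refine ⟨fun i => (x, c i), by simp [hc0], by simp [hcn], ?_⟩
    intro i hi
    have : prodW μ μ' α β (x, c i) (x, c (i+1))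
        = α * vdeg μ x * μ' (c i) (c (i+1)) := by
      simp [prodW, hsimple x]
    rw [this]
    exact mul_pos (mul_pos hα (hv x)) (hc i hi)
  rintro ⟨x, x'⟩ ⟨y, y'⟩
  obtain ⟨n, hn⟩ := hconn x y
  obtain ⟨k, hk⟩ := hconn' x' y'
  exact ⟨n + k, (liftL x y x' n hn).trans' (liftR y x' y' k hk)⟩

lemma perron_unique {W : Type*} [Fintype W] {ν : W → W → ℝ}
    (hnn : Nonneg ν) (hconn : StronglyConnectedW ν) (hv : ∀ x, 0 < vdeg ν x)
    {M N : W → ℝ} (hM : IsPerron ν M) (hN : IsPerron ν N) : ∀ x, M x = N x := by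
  obtain ⟨hMpos, hMsum, hMstat⟩ := hM
  obtain ⟨hNpos, hNsum, hNstat⟩ := hN
  have hne : Nonempty W := by
    by_contra h
    rw [not_nonempty_iff] at h
    rw [Finset.univ_eq_empty, Finset.sum_empty] at hNsum
    norm_num at hNsum
  obtain ⟨x0, -, hx0⟩ := Finset.exists_min_image Finset.univ (fun x => M x / N x)
    Finset.univ_nonempty
  set c := M x0 / N x0 with hc
  have hcle : ∀ x, c * N x ≤ M x := by
    intro x
    have := hx0 x (Finset.mem_univ x)
    calc c * N x ≤ (M x / N x) * N x := by
          exact mul_le_mul_of_nonneg_right this (hNpos x).le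
      _ = M x := div_mul_cancel₀ _ (hNpos x).ne'
  have hPnn : ∀ x y, 0 ≤ transP ν x y := fun x y => div_nonneg (hnn x y) (hv x).le
  -- closure under in-neighbors
  have hclosed : ∀ x, M x = c * N x → ∀ y, 0 < ν y x → M y = c * N y := by
    intro x hx y hy
    have hsum_eq : ∑ z, c * N z * transP ν z x = ∑ z, M z * transP ν z x := by
      rw [← hMstat x, hx]
      rw [show ∑ z, c * N z * transP ν z x = c * ∑ z, N z * transP ν z x by
        rw [Finset.mul_sum]; exact Finset.sum_congr rfl fun z _ => by ring]
      rw [← hNstat x]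
    have hterm : ∀ z ∈ Finset.univ, c * N z * transP ν z x ≤ M z * transP ν z x :=
      fun z _ => mul_le_mul_of_nonneg_right (hcle z) (hPnn z x)
    have := (Finset.sum_eq_sum_iff_of_le hterm).mp hsum_eq y (Finset.mem_univ y)
    have hPpos : 0 < transP ν y x := div_pos hy (hv y)
    exact (mul_right_cancel₀ hPpos.ne' this.symm)
  -- propagate along paths
  have hall : ∀ x, M x = c * N x := by
    have hx0eq : M x0 = c * N x0 := (div_mul_cancel₀ _ (hNpos x0).ne').symm
    intro y
    obtain ⟨n, p, hp0, hpn, hp⟩ := hconn y x0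
    have key : ∀ i ≤ n, M (p (n - i)) = c * N (p (n - i)) := by
      intro i
      induction i with
      | zero => intro _; simpa [hpn] using hx0eq
      | succ j ih =>
        intro hj
        have h1 := ih (by omega)
        have hedge := hp (n - (j+1)) (by omega)
        have : n - (j+1) + 1 = n - j := by omega
        rw [this] at hedge
        exact hclosed _ h1 _ hedge
    have := key n le_rfl
    simpa [hp0] using this
  have hc1 : c = 1 := by
    have : ∑ x, M x = c * ∑ x, N x := by
      rw [Finset.mul_sum]; exact Finset.sum_congr rfl fun x _ => hall x
    rw [hMsum, hNsum, mul_one] at this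
    exact this.symm
  intro x
  rw [hall x, hc1, one_mul]

lemma perron_prod {V V' : Type*} [Fintype V] [Fintype V']
    {μ : V → V → ℝ} {μ' : V' → V' → ℝ} {m : V → ℝ} {m' : V' → ℝ}
    {α β : ℝ} (hα : 0 < α) (hβ : 0 < β)
    (hv : ∀ x, 0 < vdeg μ x) (hv' : ∀ x', 0 < vdeg μ' x')
    (hm : IsPerron μ m) (hm' : IsPerron μ' m') :
    IsPerron (prodW μ μ' α β) (fun p => m p.1 * m' p.2) := by
  obtain ⟨hp, hs, hst⟩ := hm
  obtain ⟨hp', hs', hst'⟩ := hm'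
  have hab : (0:ℝ) < α + β := by linarith
  refine ⟨fun p => mul_pos (hp p.1) (hp' p.2), ?_, ?_⟩
  · rw [Fintype.sum_prod_type]
    simp only [← Finset.mul_sum, ← Finset.sum_mul, hs, hs', mul_one]
  · rintro ⟨x, x'⟩
    rw [Fintype.sum_prod_type]
    have h : ∀ (y : V) (y' : V'),
        m y * m' y' * transP (prodW μ μ' α β) (y, y') (x, x')
        = (if x' = y' then β / (α + β) * (m y * transP μ y x) * m' y' else 0)
          + (if x = y then α / (α + β) * (m' y' * transP μ' y' x') * m x else 0) := by
      intro y y'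
      rw [transP_prod hα hβ hv hv']
      rcases eq_or_ne x' y' with h1 | h1 <;> rcases eq_or_ne x y with h2 | h2 <;>
        simp [h1, h2] <;> ring
    simp only [h, Finset.sum_add_distrib]
    have e1 : (∑ y : V, ∑ y' : V',
        if x' = y' then β / (α + β) * (m y * transP μ y x) * m' y' else 0)
        = β / (α + β) * m x * m' x' := by
      simp only [Finset.sum_ite_eq, Finset.mem_univ, if_true]
      rw [← Finset.sum_mul, ← Finset.mul_sum, ← hst x]
    have e2 : (∑ y : V, ∑ y' : V',
        if x = y then α / (α + β) * (m' y' * transP μ' y' x') * m x else 0)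
        = α / (α + β) * m' x' * m x := by
      rw [Finset.sum_comm]
      simp only [Finset.sum_ite_eq, Finset.mem_univ, if_true]
      rw [← Finset.sum_mul, ← Finset.mul_sum, ← hst' x']
    rw [e1, e2]
    field_simp
    ring

lemma meanK_prod {V V' : Type*} [Fintype V] [Fintype V']
    {μ : V → V → ℝ} {μ' : V' → V' → ℝ} {m : V → ℝ} {m' : V' → ℝ}
    {α β : ℝ} (hα : 0 < α) (hβ : 0 < β)
    (hv : ∀ x, 0 < vdeg μ x) (hv' : ∀ x', 0 < vdeg μ' x')
    (hp : ∀ x, 0 < m x) (hp' : ∀ x', 0 < m' x')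
    (x y : V) (x' y' : V') :
    meanK (prodW μ μ' α β) (fun p => m p.1 * m' p.2) (x, x') (y, y')
      = β / (α + β) * meanK μ m x y * (if y' = x' then 1 else 0)
        + α / (α + β) * meanK μ' m' x' y' * (if y = x then 1 else 0) := by
  have hab : (0:ℝ) < α + β := by linarith
  have h1 := (hp x).ne'
  have h2 := (hp' x').ne'
  simp only [meanK, transP_prod hα hβ hv hv']
  rcases eq_or_ne y' x' with rfl | h
  · rcases eq_or_ne y x with rfl | h'
    · simp only [if_pos rfl, mul_one]
      field_simp
    · simp only [if_pos rfl, if_neg h', if_neg (Ne.symm h'), mul_one, mul_zero,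
        add_zero, zero_add]
      field_simp
  · rcases eq_or_ne y x with rfl | h'
    · simp only [if_pos rfl, if_neg h, if_neg (Ne.symm h), mul_one, mul_zero,
        add_zero, zero_add]
      field_simp
    · simp [if_neg h, if_neg h', if_neg (Ne.symm h), if_neg (Ne.symm h')]

/-- formulas for the weighted Cartesian product. -/
theorem prod_formulas
    {V V' : Type*} [Fintype V] [Fintype V']
    (μ : V → V → ℝ) (μ' : V' → V' → ℝ) (m : V → ℝ) (m' : V' → ℝ)
    (hnn : Nonneg μ) (hsimple : IsSimpleW μ) (hconn : StronglyConnectedW μ)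
    (hm : IsPerron μ m)
    (hnn' : Nonneg μ') (hsimple' : IsSimpleW μ') (hconn' : StronglyConnectedW μ')
    (hm' : IsPerron μ' m')
    (α β : ℝ) (hα : 0 < α) (hβ : 0 < β)
    (M : V × V' → ℝ) (hM : IsPerron (prodW μ μ' α β) M) :
    (∀ x x', vdeg (prodW μ μ' α β) (x, x') = (α + β) * vdeg μ x * vdeg μ' x') ∧
    (∀ x x' y y', transP (prodW μ μ' α β) (x, x') (y, y')
        = β / (α + β) * transP μ x y * (if y' = x' then 1 else 0)
          + α / (α + β) * transP μ' x' y' * (if y = x then 1 else 0)) ∧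
    (∀ x x', M (x, x') = m x * m' x') ∧
    (∀ x x' y y', meanK (prodW μ μ' α β) M (x, x') (y, y')
        = β / (α + β) * meanK μ m x y * (if y' = x' then 1 else 0)
          + α / (α + β) * meanK μ' m' x' y' * (if y = x then 1 else 0)) := by
  have hvμ : ∀ x, 0 < vdeg μ x := vdeg_pos_s8 hnn hm
  have hvμ' : ∀ x', 0 < vdeg μ' x' := vdeg_pos_s8 hnn' hm'
  have hnnP : Nonneg (prodW μ μ' α β) := by
    intro p q
    refine add_nonneg (mul_nonneg (mul_nonneg (mul_nonneg hβ.le (vdeg_nonneg hnn' _))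
      (hnn _ _)) ?_) (mul_nonneg (mul_nonneg (mul_nonneg hα.le (vdeg_nonneg hnn _))
      (hnn' _ _)) ?_) <;> split <;> norm_num
  have hN := perron_prod hα hβ hvμ hvμ' hm hm'
  have hMN : ∀ p : V × V', M p = m p.1 * m' p.2 :=
    perron_unique hnnP
      (prod_conn hα hβ hnn hnn' hsimple hsimple' hconn hconn' hvμ hvμ')
      (vdeg_pos_s8 hnnP hM) hM hN
  refine ⟨fun x x' => vdeg_prod μ μ' α β x x',
    fun x x' y y' => transP_prod hα hβ hvμ hvμ' x y x' y',
    fun x x' => hMN (x, x'), fun x x' y y' => ?_⟩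
  have hh := meanK_prod hα hβ hvμ hvμ' hm.1 hm'.1 x y x' y' (μ := μ) (μ' := μ') (m := m) (m' := m')
  simp only [meanK] at hh ⊢
  rw [hMN (y, y'), hMN (x, x')]
  exact hh
end
end

section
/- Simple curvature-dimension inequality: for every f : V → ℝ, Γ₂(f,f) ≥ (1/2)(Δf)² + 𝒦̃·Γ(f,f) pointwise, where 𝒦̃(x) := 2·inf_{y∈𝒩_x}𝒫(y,x) − 1. -/
open Finset Filter Topology MeasureTheory
open scoped Classical

noncomputable section

variable {V : Type*}

/-- The `Γ`-operator of the negative Chung Laplacian. -/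
def Gam {V : Type*} [Fintype V] (P : V → V → ℝ) (f₀ f₁ : V → ℝ) (x : V) : ℝ :=
  (negL P (fun z => f₀ z * f₁ z) x - f₀ x * negL P f₁ x - f₁ x * negL P f₀ x) / 2

/-- The `Γ₂`-operator. -/
def Gam2 {V : Type*} [Fintype V] (P : V → V → ℝ) (f : V → ℝ) (x : V) : ℝ :=
  (negL P (fun z => Gam P f f z) x - 2 * Gam P f (fun z => negL P f z) x) / 2

section AuxCD

variable {V : Type*} [Fintype V]

lemma gam_eq_aux (P : V → V → ℝ) (h1 : ∀ a, ∑ b, P a b = 1) (f g : V → ℝ) (x : V) :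
    Gam P f g x = (∑ y, P x y * ((f y - f x) * (g y - g x))) / 2 := by
  have expand : ∑ y, P x y * ((f y - f x) * (g y - g x))
      = ∑ y, (P x y * (f y * g y) - f x * (P x y * g y) - g x * (P x y * f y)
          + (f x * g x) * P x y) := Finset.sum_congr rfl fun y _ => by ring
  have h := h1 x
  simp only [Gam, negL, expand, Finset.sum_add_distrib, Finset.sum_sub_distrib,
    ← Finset.mul_sum, h, mul_one]
  ring

lemma inner_eq_aux (P : V → V → ℝ) (h1 : ∀ a, ∑ b, P a b = 1) (f : V → ℝ) (x y : V) :
    ∑ z, P y z * ((f x - 2*f y + f z) * (f x - 2*f y + f z))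
      = (∑ z, P y z * ((f z - f y) * (f z - f y)))
        - 2 * ((f y - f x) * ((∑ z, P y z * f z) - f y))
        + (f y - f x) * (f y - f x) := by
  have expand : ∀ z, P y z * ((f x - 2*f y + f z) * (f x - 2*f y + f z))
      = P y z * ((f z - f y) * (f z - f y)) - (2*(f y - f x)) * (P y z * f z)
        + (2*(f y - f x) * f y + (f y - f x) * (f y - f x)) * P y z := fun z => by ring
  rw [Finset.sum_congr rfl fun z _ => expand z]
  rw [Finset.sum_add_distrib, Finset.sum_sub_distrib, ← Finset.mul_sum, ← Finset.mul_sum,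
    h1 y]
  ring

lemma master_aux (P : V → V → ℝ) (h1 : ∀ a, ∑ b, P a b = 1) (f : V → ℝ) (x : V) :
    Gam2 P f x
      = (∑ y, P x y * ∑ z, P y z * ((f x - 2*f y + f z) * (f x - 2*f y + f z))) / 4
        - Gam P f f x + (1/2) * (negL P f x)^2 := by
  have hD : ∑ y, P x y * (f y - f x) = negL P f x := by
    have e : ∀ y, P x y * (f y - f x) = P x y * f y - P x y * f x := fun y => by ring
    rw [Finset.sum_congr rfl fun y _ => e y, Finset.sum_sub_distrib, ← Finset.sum_mul, h1 x,
      negL, one_mul]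
  have hB' : Gam P f (fun z => negL P f z) x
      = ((∑ y, P x y * ((f y - f x) * negL P f y)) - negL P f x * negL P f x) / 2 := by
    rw [gam_eq_aux P h1]
    have e : ∀ y, P x y * ((f y - f x) * (negL P f y - negL P f x))
        = P x y * ((f y - f x) * negL P f y) - negL P f x * (P x y * (f y - f x)) :=
      fun y => by ring
    rw [Finset.sum_congr rfl fun y _ => e y, Finset.sum_sub_distrib, ← Finset.mul_sum, hD]
  have hA' : negL P (fun z => Gam P f f z) x
      = (∑ y, P x y * ∑ z, P y z * ((f z - f y) * (f z - f y))) / 2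
        - (∑ y, P x y * ((f y - f x) * (f y - f x))) / 2 := by
    simp only [negL]
    have e1 : ∀ y, P x y * Gam P f f y
        = (P x y * ∑ z, P y z * ((f z - f y) * (f z - f y))) / 2 := fun y => by
      rw [gam_eq_aux P h1]; ring
    rw [Finset.sum_congr rfl fun y _ => e1 y, ← Finset.sum_div, gam_eq_aux P h1 f f x]
  have hG' : ∑ y, P x y * ∑ z, P y z * ((f x - 2*f y + f z) * (f x - 2*f y + f z))
      = (∑ y, P x y * ∑ z, P y z * ((f z - f y) * (f z - f y)))
        - 2 * (∑ y, P x y * ((f y - f x) * negL P f y))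
        + (∑ y, P x y * ((f y - f x) * (f y - f x))) := by
    have e1 : ∀ y, P x y * ∑ z, P y z * ((f x - 2*f y + f z) * (f x - 2*f y + f z))
        = P x y * (∑ z, P y z * ((f z - f y) * (f z - f y)))
          - 2 * (P x y * ((f y - f x) * negL P f y))
          + P x y * ((f y - f x) * (f y - f x)) := by
      intro y; rw [inner_eq_aux P h1 f x y]; simp only [negL]; ring
    rw [Finset.sum_congr rfl fun y _ => e1 y, Finset.sum_add_distrib, Finset.sum_sub_distrib,
      ← Finset.mul_sum]
  have hC' : Gam P f f x = (∑ y, P x y * ((f y - f x) * (f y - f x))) / 2 :=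
    gam_eq_aux P h1 f f x
  rw [Gam2, hA', hB', hG', hC']
  ring

lemma vdeg_pos_aux (μ : V → V → ℝ) (hnn : Nonneg μ) (hsimple : IsSimpleW μ)
    (hconn : StronglyConnectedW μ) (hN : ∀ x : V, (nbr μ x).Nonempty) (x : V) :
    0 < vdeg μ x := by
  obtain ⟨w, hw⟩ := hN x
  simp only [nbr, Finset.mem_filter, Finset.mem_univ, true_and] at hw
  have key : ∃ y, 0 < μ x y := by
    rcases hw with h | h
    · exact ⟨w, h⟩
    · have hxw : x ≠ w := by
        rintro rfl; rw [hsimple x] at h; exact lt_irrefl 0 h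
      obtain ⟨n, c, hc0, hcn, hstep⟩ := hconn x w
      have hn : n ≠ 0 := by rintro rfl; exact hxw (hc0.symm.trans hcn)
      have h0 := hstep 0 (Nat.pos_of_ne_zero hn)
      rw [hc0] at h0
      exact ⟨c 1, h0⟩
  obtain ⟨y, hy⟩ := key
  have hle : μ x y ≤ vdeg μ x :=
    Finset.single_le_sum (fun i _ => hnn x i) (Finset.mem_univ y)
  linarith

lemma sum_transP_aux (μ : V → V → ℝ) (x : V) (hv : 0 < vdeg μ x) :
    ∑ y, transP μ x y = 1 := by
  unfold transP
  rw [← Finset.sum_div]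
  exact div_self hv.ne'

lemma sum_meanK_aux (μ : V → V → ℝ) (m : V → ℝ) (hm : IsPerron μ m)
    (hv : ∀ z, 0 < vdeg μ z) (x : V) : ∑ y, meanK μ m x y = 1 := by
  unfold meanK
  rw [← Finset.sum_div, Finset.sum_add_distrib, sum_transP_aux μ x (hv x)]
  have h2 : ∑ y, m y / m x * transP μ y x = 1 := by
    have e : ∀ y, m y / m x * transP μ y x = (m y * transP μ y x) / m x := fun y => by ring
    rw [Finset.sum_congr rfl fun y _ => e y, ← Finset.sum_div, ← hm.2.2 x]
    exact div_self (hm.1 x).ne'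
  rw [h2]; norm_num

lemma meanK_nonneg_aux (μ : V → V → ℝ) (m : V → ℝ) (hnn : Nonneg μ) (hm : IsPerron μ m)
    (hv : ∀ z, 0 < vdeg μ z) (a b : V) : 0 ≤ meanK μ m a b := by
  unfold meanK
  apply div_nonneg _ (by norm_num)
  exact add_nonneg (div_nonneg (hnn a b) (hv a).le)
    (mul_nonneg (div_nonneg (hm.1 b).le (hm.1 a).le) (div_nonneg (hnn b a) (hv b).le))

end AuxCD

/-- simple curvature-dimension inequality. -/
theorem simple_curvature_dimension
    {V : Type*} [Fintype V] (μ : V → V → ℝ) (m : V → ℝ)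
    (hnn : Nonneg μ) (hsimple : IsSimpleW μ) (hconn : StronglyConnectedW μ)
    (hm : IsPerron μ m) (hN : ∀ x : V, (nbr μ x).Nonempty)
    (f : V → ℝ) (x : V) :
    (1/2) * (negL (meanK μ m) f x)^2
      + (2 * (nbr μ x).inf' (hN x) (fun y => meanK μ m y x) - 1) * Gam (meanK μ m) f f x
      ≤ Gam2 (meanK μ m) f x := by
  have hv : ∀ z, 0 < vdeg μ z := fun z => vdeg_pos_aux μ hnn hsimple hconn hN z
  have h1 : ∀ a, ∑ b, meanK μ m a b = 1 := sum_meanK_aux μ m hm hv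
  have hPnn : ∀ a b, 0 ≤ meanK μ m a b := meanK_nonneg_aux μ m hnn hm hv
  have hP0 : ∀ y, y ∉ nbr μ x → meanK μ m x y = 0 := by
    intro y hy
    simp only [nbr, Finset.mem_filter, Finset.mem_univ, true_and, not_or, not_lt] at hy
    have e1 : μ x y = 0 := le_antisymm hy.1 (hnn x y)
    have e2 : μ y x = 0 := le_antisymm hy.2 (hnn y x)
    simp [meanK, transP, e1, e2]
  have hmaster := master_aux (meanK μ m) h1 f x
  have hC := gam_eq_aux (meanK μ m) h1 f f x
  set K := (nbr μ x).inf' (hN x) (fun y => meanK μ m y x) with hKdef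
  have hKle : ∀ y, (4*K) * (meanK μ m x y * ((f y - f x) * (f y - f x)))
      ≤ meanK μ m x y * ∑ z, meanK μ m y z * ((f x - 2*f y + f z) * (f x - 2*f y + f z)) := by
    intro y
    by_cases hy : y ∈ nbr μ x
    · have hKy : K ≤ meanK μ m y x := Finset.inf'_le _ hy
      have hsingle : meanK μ m y x * ((f x - 2*f y + f x) * (f x - 2*f y + f x))
          ≤ ∑ z, meanK μ m y z * ((f x - 2*f y + f z) * (f x - 2*f y + f z)) :=
        Finset.single_le_sum
          (f := fun z => meanK μ m y z * ((f x - 2*f y + f z) * (f x - 2*f y + f z)))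
          (fun z _ => mul_nonneg (hPnn y z) (mul_self_nonneg _)) (Finset.mem_univ x)
      have h4 : (4*K) * ((f y - f x) * (f y - f x))
          ≤ meanK μ m y x * ((f x - 2*f y + f x) * (f x - 2*f y + f x)) := by
        nlinarith [mul_self_nonneg (f y - f x)]
      calc (4*K) * (meanK μ m x y * ((f y - f x) * (f y - f x)))
          = meanK μ m x y * ((4*K) * ((f y - f x) * (f y - f x))) := by ring
        _ ≤ meanK μ m x y
              * ∑ z, meanK μ m y z * ((f x - 2*f y + f z) * (f x - 2*f y + f z)) :=
            mul_le_mul_of_nonneg_left (h4.trans hsingle) (hPnn x y)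
    · rw [hP0 y hy]; simp
  have hsum := Finset.sum_le_sum (fun y (_ : y ∈ Finset.univ) => hKle y)
  rw [← Finset.mul_sum] at hsum
  rw [hmaster, hC]
  nlinarith [hsum]
end
end
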